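/- Let P be the generating function of the set of Dyck paths with no up-run of length greater than 2 and no peak at any height in {2r+3 : r ≥ 0}, and let Q be the generating function of the set of Dyck paths with no up-run of length greater than 2 and no peak at any height in {2r+2 : r ≥ 0}. Then, as formal power series, P = 1 + z·P + z^2·Q·P and Q = 1 + z·Q. -/

import Mathlib

/-- The height of a path (list of up/down steps, `true` = up = +1, `false` = down = −1)
after its first `k` steps. -/
def heightAt (p : List Bool) (k : ℕ) : ℤ :=
  ((p.take k).count true : ℤ) - ((p.take k).count false : ℤ)

/-- A Dyck path: all partial sums nonnegative and total sum zero. -/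
def IsDyck (p : List Bool) : Prop :=
  (∀ k, 0 ≤ heightAt p k) ∧ heightAt p p.length = 0

/-- A peak at height `h`: an up-step immediately followed by a down-step,
the height after the up-step being `h`. -/
def HasPeakAt (p : List Bool) (h : ℤ) : Prop :=
  ∃ i, p[i]? = some true ∧ p[i+1]? = some false ∧ heightAt p (i+1) = h

/-- A valley at height `h`: a down-step immediately followed by an up-step,
the height after the down-step being `h`. -/
def HasValleyAt (p : List Bool) (h : ℤ) : Prop :=
  ∃ i, p[i]? = some false ∧ p[i+1]? = some true ∧ heightAt p (i+1) = h

/-- `p` has an up-run of length `m`: a maximal block of exactly `m` consecutive up-steps. -/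
def HasUpRun (p : List Bool) (m : ℕ) : Prop :=
  ∃ i, (∀ j, j < m → p[i+j]? = some true) ∧
    (i = 0 ∨ p[i-1]? = some false) ∧
    (p[i+m]? = some false ∨ i + m = p.length)

/-- `p` has a down-run of length `m`: a maximal block of exactly `m` consecutive down-steps. -/
def HasDownRun (p : List Bool) (m : ℕ) : Prop :=
  ∃ i, (∀ j, j < m → p[i+j]? = some false) ∧
    (i = 0 ∨ p[i-1]? = some true) ∧
    (p[i+m]? = some true ∨ i + m = p.length)

/-- Generating function of the set of Dyck paths satisfying `Q`:
the coefficient of `z^n` is the number of such paths of semilength `n`. -/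
noncomputable def genFun (Q : List Bool → Prop) : PowerSeries ℕ :=
  PowerSeries.mk fun n => Set.ncard {p : List Bool | p.length = 2 * n ∧ IsDyck p ∧ Q p}


/-!
Forbidding up-runs longer than 2 and a peak at height `B + 1` (for `B = 1, 2`) confines a Dyck
path to the strip `0 ≤ height ≤ B`: the first step above `B` would either close a peak at `B + 1`
or be the third of three consecutive up-steps. Conversely a path in that strip has no peak above
`B` and no up-run longer than `B`. Counting strip paths by their first step gives `Q = ∑ zⁿ` and
`P + z = 1 + 2zP`; over `ℤ` these say `Q(1 - z) = 1` and `P(1 - 2z) = 1 - z`, and multiplying the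
claimed identity for `P` by `1 - z` reduces it to them.
-/

lemma heightAt_zero (p : List Bool) : heightAt p 0 = 0 := by simp [heightAt]

lemma heightAt_of_length_le {p : List Bool} {k : ℕ} (h : p.length ≤ k) :
    heightAt p k = heightAt p p.length := by
  simp [heightAt, List.take_of_length_le h]

lemma heightAt_succ (p : List Bool) (k : ℕ) :
    heightAt p (k + 1) = heightAt p k + p[k]?.elim 0 fun b => bif b then 1 else -1 := by
  rcases h : p[k]? with _ | _ | _ <;>
    simp [heightAt, List.take_add_one, h, List.count_append] <;> ring

lemma heightAt_cons_succ (b : Bool) (t : List Bool) (k : ℕ) :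
    heightAt (b :: t) (k + 1) = (bif b then 1 else -1) + heightAt t k := by
  cases b <;> simp [heightAt] <;> ring

lemma heightAt_add_of_ups {p : List Bool} {i m : ℕ} (h : ∀ j < m, p[i + j]? = some true) :
    heightAt p (i + m) = heightAt p i + m := by
  induction m with
  | zero => simp
  | succ m ih =>
    rw [← add_assoc, heightAt_succ, h m m.lt_succ_self, ih fun j hj => h j (by omega)]
    push_cast [Option.elim, cond]
    ring

lemma heightAt_succ_le (p : List Bool) (k : ℕ) : heightAt p (k + 1) ≤ heightAt p k + 1 := by
  rw [heightAt_succ]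
  rcases p[k]? with _ | _ | _ <;> simp

lemma exists_hasUpRun_of_left_end {p : List Bool} {i m : ℕ} (hm : 0 < m)
    (h : ∀ j < m, p[i + j]? = some true) (hl : i = 0 ∨ p[i - 1]? = some false) :
    ∃ m' ≥ m, HasUpRun p m' := by
  have hex : ∃ k, p[i + k]? ≠ some true := ⟨p.length, by simp⟩
  have hups : ∀ j < Nat.find hex, p[i + j]? = some true := fun j hj => by
    simpa using Nat.find_min hex hj
  have hle : m ≤ Nat.find hex := (Nat.le_find_iff hex m).2 fun j hj => by simpa using h j hj
  have hlast : i + (Nat.find hex - 1) < p.length :=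
    (List.getElem?_eq_some_iff.1 (hups _ (by omega))).1
  refine ⟨Nat.find hex, hle, i, hups, hl, ?_⟩
  rcases hend : p[i + Nat.find hex]? with _ | _ | _
  · have := List.getElem?_eq_none_iff.1 hend; omega
  · simp
  · exact absurd hend (Nat.find_spec hex)

lemma exists_hasUpRun_of_ups {p : List Bool} {i m : ℕ} (hm : 0 < m)
    (h : ∀ j < m, p[i + j]? = some true) : ∃ m' ≥ m, HasUpRun p m' := by
  induction i generalizing m with
  | zero => exact exists_hasUpRun_of_left_end hm h (.inl rfl)
  | succ i ih =>
    rcases hprev : p[i]? with _ | _ | _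
    · have := (List.getElem?_eq_some_iff.1 (h 0 hm)).1
      have := List.getElem?_eq_none_iff.1 hprev
      omega
    · exact exists_hasUpRun_of_left_end hm h (.inr hprev)
    · obtain ⟨m', hm', hrun⟩ := ih (m := m + 1) m.succ_pos fun j hj => by
        rcases j with _ | j
        · exact hprev
        · rw [show i + (j + 1) = i + 1 + j by omega]; exact h j (by omega)
      exact ⟨m', by omega, hrun⟩

lemma heightAt_le_of_not_hasPeakAt {p : List Bool} {B : ℤ} (hB : 1 ≤ B) (hp : IsDyck p)
    (hpeak : ¬ HasPeakAt p (B + 1)) (hrun : ∀ m, 2 < m → ¬ HasUpRun p m) (k : ℕ) :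
    heightAt p k ≤ B := by
  by_contra! hk
  have hex : ∃ k, B < heightAt p k := ⟨k, hk⟩
  have hmin : ∀ t < Nat.find hex, heightAt p t ≤ B := fun t ht => not_lt.1 (Nat.find_min hex ht)
  obtain ⟨i, hi⟩ : ∃ i, Nat.find hex = i + 2 := by
    have h1 := heightAt_succ_le p 0
    rw [heightAt_zero] at h1
    rcases hn : Nat.find hex with _ | _ | i
    · have := Nat.find_spec hex
      rw [hn, heightAt_zero] at this
      omega
    · have := Nat.find_spec hex
      rw [hn] at this
      omega
    · exact ⟨i, rfl⟩
  -- `i + 2` is the first time the height exceeds `B`, so steps `i` and `i + 1` are up-steps, and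
  -- step `i + 2` closes a peak at `B + 1`, is a third up-step, or does not exist
  have hlow := hmin i (by omega)
  have hmid := hmin (i + 1) (by omega)
  have hhigh : B < heightAt p (i + 2) := hi ▸ Nat.find_spec hex
  have hs0 : heightAt p (i + 1) = _ := heightAt_succ p i
  have hs1 : heightAt p (i + 2) = _ := heightAt_succ p (i + 1)
  rcases h1 : p[i + 1]? with _ | _ | _ <;> simp only [h1, Option.elim, cond] at hs1
  · omega
  · omega
  rcases h0 : p[i]? with _ | _ | _ <;> simp only [h0, Option.elim, cond] at hs0
  · have := (List.getElem?_eq_some_iff.1 h1).1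
    have := List.getElem?_eq_none_iff.1 h0
    omega
  · omega
  rcases h2 : p[i + 2]? with _ | _ | _
  · rw [heightAt_of_length_le (List.getElem?_eq_none_iff.1 h2), hp.2] at hhigh
    omega
  · exact hpeak ⟨i + 1, h1, h2, show heightAt p (i + 2) = B + 1 by omega⟩
  · obtain ⟨m, hm, hrun'⟩ := exists_hasUpRun_of_ups (p := p) (i := i) (m := 3) (by norm_num)
      fun j hj => by interval_cases j <;> assumption
    exact hrun m (by omega) hrun'

def IsStripPath (B a : ℤ) (p : List Bool) : Prop :=
  (∀ k, 0 ≤ a + heightAt p k ∧ a + heightAt p k ≤ B) ∧ a + heightAt p p.length = 0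

noncomputable def stripCount (B a : ℤ) (n : ℕ) : ℕ :=
  {p : List Bool | p.length = n ∧ IsStripPath B a p}.ncard

section Strip

variable {B a : ℤ}

lemma isStripPath_nil : IsStripPath B a [] ↔ a = 0 ∧ 0 ≤ B := by
  simp only [IsStripPath, heightAt, List.take_nil, List.count_nil]
  constructor
  · rintro ⟨h, ha⟩
    obtain rfl : a = 0 := by simpa using ha
    simpa using (h 0).2
  · rintro ⟨rfl, hB⟩
    simp [hB]

lemma isStripPath_cons (b : Bool) (t : List Bool) :
    IsStripPath B a (b :: t) ↔ (0 ≤ a ∧ a ≤ B) ∧ IsStripPath B (a + bif b then 1 else -1) t := by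
  simp only [IsStripPath, List.length_cons]
  constructor
  · rintro ⟨h, hend⟩
    refine ⟨by simpa [heightAt_zero] using h 0, fun k => ?_, ?_⟩
    · simpa [heightAt_cons_succ, add_assoc] using h (k + 1)
    · simpa [heightAt_cons_succ, add_assoc] using hend
  · rintro ⟨ha, h, hend⟩
    refine ⟨fun k => ?_, by simpa [heightAt_cons_succ, add_assoc] using hend⟩
    rcases k with _ | k
    · simpa [heightAt_zero] using ha
    · simpa [heightAt_cons_succ, add_assoc] using h k

lemma isDyck_and_heightAt_le_iff (p : List Bool) :
    (IsDyck p ∧ ∀ k, heightAt p k ≤ B) ↔ IsStripPath B 0 p := by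
  simp only [IsDyck, IsStripPath, zero_add, forall_and]
  tauto

lemma stripCount_zero : stripCount B a 0 = if a = 0 ∧ 0 ≤ B then 1 else 0 := by
  simp only [stripCount, List.length_eq_zero_iff]
  split_ifs with h
  · convert Set.ncard_singleton ([] : List Bool)
    ext p
    exact ⟨fun hp => hp.1, fun hp => ⟨hp, hp ▸ isStripPath_nil.2 h⟩⟩
  · convert Set.ncard_empty (List Bool)
    ext p
    refine ⟨?_, fun hp => hp.elim⟩
    rintro ⟨rfl, hp⟩
    exact h (isStripPath_nil.1 hp)

lemma stripCount_succ (n : ℕ) : stripCount B a (n + 1) =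
    if 0 ≤ a ∧ a ≤ B then stripCount B (a + 1) n + stripCount B (a - 1) n else 0 := by
  split_ifs with ha
  · have hset : {p : List Bool | p.length = n + 1 ∧ IsStripPath B a p} =
        List.cons true '' {p | p.length = n ∧ IsStripPath B (a + 1) p} ∪
          List.cons false '' {p | p.length = n ∧ IsStripPath B (a - 1) p} := by
      ext (_ | ⟨b, t⟩)
      · simp
      · cases b <;> simp [isStripPath_cons, ha, sub_eq_add_neg]
    have hfin (c : ℤ) : {p : List Bool | p.length = n ∧ IsStripPath B c p}.Finite :=
      (List.finite_length_eq Bool n).subset fun _ hp => hp.1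
    have hdisj : Disjoint (List.cons true '' {p | p.length = n ∧ IsStripPath B (a + 1) p})
        (List.cons false '' {p | p.length = n ∧ IsStripPath B (a - 1) p}) := by
      rw [Set.disjoint_left]
      rintro _ ⟨_, _, rfl⟩ ⟨_, _, h⟩
      simp at h
    rw [stripCount, hset, Set.ncard_union_eq hdisj ((hfin _).image _) ((hfin _).image _),
      Set.ncard_image_of_injective _ List.cons_injective,
      Set.ncard_image_of_injective _ List.cons_injective, stripCount, stripCount]
  · rw [stripCount]
    convert Set.ncard_empty (List Bool)
    ext (_ | ⟨b, t⟩)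
    · simp
    · simp [isStripPath_cons, ha]

lemma stripCount_eq_zero (ha : ¬ (0 ≤ a ∧ a ≤ B)) (n : ℕ) : stripCount B a n = 0 := by
  rcases n with _ | n
  · rw [stripCount_zero, if_neg]
    omega
  · rw [stripCount_succ, if_neg ha]

end Strip

lemma not_hasUpRun_of_heightAt_le {p : List Bool} {B : ℤ} (hnonneg : ∀ k, 0 ≤ heightAt p k)
    (hle : ∀ k, heightAt p k ≤ B) {m : ℕ} (hm : B < m) : ¬ HasUpRun p m := by
  rintro ⟨i, hups, -, -⟩
  have := heightAt_add_of_ups hups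
  have := hnonneg i
  have := hle (i + m)
  omega

lemma isDyck_and_avoids_iff_isStripPath {B c : ℤ} (hB : 1 ≤ B) (hB2 : B ≤ 2) (hc : c = B + 1)
    (p : List Bool) :
    (IsDyck p ∧ (∀ r : ℕ, ¬ HasPeakAt p (2 * (r : ℤ) + c)) ∧ ∀ m : ℕ, 2 < m → ¬ HasUpRun p m) ↔
      IsStripPath B 0 p := by
  rw [← isDyck_and_heightAt_le_iff]
  constructor
  · rintro ⟨hd, hpeak, hrun⟩
    exact ⟨hd, heightAt_le_of_not_hasPeakAt hB hd (by simpa [hc] using hpeak 0) hrun⟩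
  · rintro ⟨hd, hle⟩
    refine ⟨hd, fun r ⟨i, _, _, hi⟩ => ?_, fun m hm => not_hasUpRun_of_heightAt_le hd.1 hle ?_⟩
    · have := hle (i + 1)
      omega
    · omega

lemma genFun_avoids_eq_mk_stripCount {B c : ℤ} (hB : 1 ≤ B) (hB2 : B ≤ 2) (hc : c = B + 1) :
    genFun (fun p => (∀ r : ℕ, ¬ HasPeakAt p (2 * (r : ℤ) + c)) ∧
        ∀ m : ℕ, 2 < m → ¬ HasUpRun p m) =
      PowerSeries.mk fun n => stripCount B 0 (2 * n) := by
  simp only [genFun, stripCount, ← isDyck_and_avoids_iff_isStripPath hB hB2 hc]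

lemma stripCount_one_zero_even_succ (n : ℕ) :
    stripCount 1 0 (2 * (n + 1)) = stripCount 1 0 (2 * n) := by
  rw [show 2 * (n + 1) = 2 * n + 1 + 1 by ring, stripCount_succ, stripCount_succ]
  norm_num [stripCount_eq_zero]

lemma stripCount_two_zero_even_succ_succ (n : ℕ) :
    stripCount 2 0 (2 * (n + 2)) = 2 * stripCount 2 0 (2 * (n + 1)) := by
  rw [show 2 * (n + 2) = 2 * n + 1 + 1 + 1 + 1 by ring,
    show 2 * (n + 1) = 2 * n + 1 + 1 by ring]
  simp only [stripCount_succ]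
  norm_num [stripCount_eq_zero, two_mul]

lemma stripCount_two_zero_two : stripCount 2 0 2 = 1 := by
  simp only [stripCount_succ, stripCount_zero]
  norm_num

section SeriesIdentities

open PowerSeries

variable {R : Type*} [Semiring R]

lemma mk_eq_one_add_X_mul {f : ℕ → R} (h0 : f 0 = 1) (hsucc : ∀ n, f (n + 1) = f n) :
    mk f = 1 + X * mk f := by
  ext (_ | n)
  · simp [h0]
  · simp [coeff_succ_X_mul, hsucc, coeff_one]

lemma mk_add_X_eq {f : ℕ → R} (h0 : f 0 = 1) (h1 : f 1 = 1)
    (hsucc : ∀ n, f (n + 2) = 2 * f (n + 1)) : mk f + X = 1 + 2 * X * mk f := by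
  rw [two_mul, add_mul]
  ext (_ | _ | n)
  · simp [h0]
  · simp [coeff_succ_X_mul, h0, h1]
  · simp [coeff_succ_X_mul, hsucc, coeff_one, coeff_X, two_mul]

lemma eq_one_add_X_mul_add_X_sq_mul {P Q : ℕ⟦X⟧} (hQ : Q = 1 + X * Q)
    (hP : P + X = 1 + 2 * X * P) : P = 1 + X * P + X ^ 2 * Q * P := by
  apply map_injective (Nat.castRingHom ℤ) Nat.cast_injective
  replace hQ := congrArg (map (Nat.castRingHom ℤ)) hQ
  replace hP := congrArg (map (Nat.castRingHom ℤ)) hP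
  simp only [map_add, map_mul, map_one, map_X, map_pow, map_ofNat] at hQ hP ⊢
  have hX : (1 - X : ℤ⟦X⟧) ≠ 0 := fun h => by simpa using congrArg constantCoeff h
  -- over `ℤ`, `hQ` and `hP` say `Q * (1 - X) = 1` and `P * (1 - 2X) = 1 - X`
  refine mul_left_cancel₀ hX ?_
  linear_combination hP - X ^ 2 * map (Nat.castRingHom ℤ) P * hQ

end SeriesIdentities

/-- With `P` the generating function of Dyck paths with no up-run longer than 2 and no peak
at a height in `{2r+3 : r ≥ 0}`, and `Q` the same with peak heights avoiding
`{2r+2 : r ≥ 0}`, we have `P = 1 + zP + z²QP` and `Q = 1 + zQ`. -/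
theorem stmt2 :
    (genFun (fun p => (∀ r : ℕ, ¬ HasPeakAt p (2 * (r : ℤ) + 3)) ∧
          (∀ m : ℕ, 2 < m → ¬ HasUpRun p m)) =
        1 + PowerSeries.X * genFun (fun p => (∀ r : ℕ, ¬ HasPeakAt p (2 * (r : ℤ) + 3)) ∧
            (∀ m : ℕ, 2 < m → ¬ HasUpRun p m)) +
          PowerSeries.X ^ 2 *
            genFun (fun p => (∀ r : ℕ, ¬ HasPeakAt p (2 * (r : ℤ) + 2)) ∧
              (∀ m : ℕ, 2 < m → ¬ HasUpRun p m)) *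
            genFun (fun p => (∀ r : ℕ, ¬ HasPeakAt p (2 * (r : ℤ) + 3)) ∧
              (∀ m : ℕ, 2 < m → ¬ HasUpRun p m))) ∧
    (genFun (fun p => (∀ r : ℕ, ¬ HasPeakAt p (2 * (r : ℤ) + 2)) ∧
          (∀ m : ℕ, 2 < m → ¬ HasUpRun p m)) =
        1 + PowerSeries.X * genFun (fun p => (∀ r : ℕ, ¬ HasPeakAt p (2 * (r : ℤ) + 2)) ∧
            (∀ m : ℕ, 2 < m → ¬ HasUpRun p m))) := by
  rw [genFun_avoids_eq_mk_stripCount (B := 2) (c := 3) (by norm_num) (by norm_num) (by norm_num),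
    genFun_avoids_eq_mk_stripCount (B := 1) (c := 2) (by norm_num) (by norm_num) (by norm_num)]
  have hQ := mk_eq_one_add_X_mul (f := fun n => stripCount 1 0 (2 * n))
    (by simp [stripCount_zero]) stripCount_one_zero_even_succ
  have hP := mk_add_X_eq (f := fun n => stripCount 2 0 (2 * n))
    (by simp [stripCount_zero]) stripCount_two_zero_two stripCount_two_zero_even_succ_succ
  exact ⟨eq_one_add_X_mul_add_X_sq_mul hQ hP, hQ⟩
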